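/- arXiv:1809.00554 — 3 statements merged into one kernel-verified Lean document; each statement's English description precedes it below -/
import Mathlib

section
/- Let the set of peers be a finite set of cardinality 3f+1, let F be a subset of faulty peers with |F| ≤ f, and let H be a type of hashes. Suppose voting in a round is modeled by a relation votes ⊆ Peer × H such that every honest peer (peer not in F) votes for at most one hash, i.e., for every honest peer p and hashes h₁, h₂, if votes(p,h₁) and votes(p,h₂) then h₁ = h₂. If h₁ and h₂ are hashes such that the set of peers voting for h₁ has cardinality at least 2f+1 and the set of peers voting for h₂ has cardinality at least 2f+1, then h₁ = h₂. -/
/-- Safety: if honest peers vote for at most one hash, two hashes each receiving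
votes from at least `2f+1` peers must coincide. -/
theorem no_conflicting_commits (Peer : Type*) [Fintype Peer] (f : ℕ)
    (hcard : Fintype.card Peer = 3 * f + 1)
    (F : Set Peer) (hF : F.ncard ≤ f)
    (H : Type*) (votes : Peer → H → Prop)
    (honest : ∀ p ∉ F, ∀ h₁ h₂ : H, votes p h₁ → votes p h₂ → h₁ = h₂)
    (h₁ h₂ : H)
    (c1 : 2 * f + 1 ≤ {p | votes p h₁}.ncard)
    (c2 : 2 * f + 1 ≤ {p | votes p h₂}.ncard) :
    h₁ = h₂ := by
  set A := {p | votes p h₁}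
  set B := {p | votes p h₂}
  have hfin : ∀ s : Set Peer, s.Finite := fun s => s.toFinite
  have hinter : f + 1 ≤ (A ∩ B).ncard := by
    have h1 := Set.ncard_inter_add_ncard_union A B (hfin A) (hfin B)
    have h2 : (A ∪ B).ncard ≤ 3 * f + 1 := by
      have := Set.ncard_le_ncard (Set.subset_univ (A ∪ B)) (hfin _)
      rwa [Set.ncard_univ, Nat.card_eq_fintype_card, hcard] at this
    omega
  have hne : ((A ∩ B) \ F).Nonempty := by
    rw [Set.nonempty_iff_ne_empty]
    intro hemp
    have hsub : A ∩ B ⊆ F := by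
      intro x hx
      by_contra hxF
      exact absurd hemp (Set.nonempty_iff_ne_empty.mp ⟨x, hx, hxF⟩)
    have := Set.ncard_le_ncard hsub (hfin F)
    omega
  obtain ⟨p, ⟨hpA, hpB⟩, hpF⟩ := hne
  exact honest p hpF h₁ h₂ hpA hpB
end

section
/- Let the set of peers be a finite set of cardinality 3f+1, let F be a subset of faulty peers with |F| ≤ f, and let H be a type of hashes. Suppose voting is given by a relation votes ⊆ Peer × H under which every honest peer votes for at most one hash. Define a hash h to be committed if the set of peers voting for h has cardinality at least 2f+1. Then the set of committed hashes is a subsingleton: there is at most one committed hash per round. -/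
/-- Safety: the set of committed hashes (receiving votes from at least `2f+1` peers)
is a subsingleton, when honest peers vote for at most one hash. -/
theorem committed_hashes_subsingleton (Peer : Type*) [Fintype Peer] (f : ℕ)
    (hcard : Fintype.card Peer = 3 * f + 1)
    (F : Set Peer) (hF : F.ncard ≤ f)
    (H : Type*) (votes : Peer → H → Prop)
    (honest : ∀ p ∉ F, ∀ h₁ h₂ : H, votes p h₁ → votes p h₂ → h₁ = h₂) :
    {h : H | 2 * f + 1 ≤ {p | votes p h}.ncard}.Subsingleton := by
  intro h₁ hm₁ h₂ hm₂
  simp only [Set.mem_setOf_eq] at hm₁ hm₂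
  set A := {p | votes p h₁}
  set B := {p | votes p h₂}
  have hAfin : A.Finite := Set.toFinite _
  have hBfin : B.Finite := Set.toFinite _
  have hFfin : F.Finite := Set.toFinite _
  have hunion : (A ∪ B).ncard ≤ 3 * f + 1 := by
    have := Set.ncard_le_ncard (Set.subset_univ (A ∪ B)) (Set.toFinite _)
    simpa [Set.ncard_univ, Nat.card_eq_fintype_card, hcard] using this
  have hintcard : f + 1 ≤ (A ∩ B).ncard := by
    have := Set.ncard_inter_add_ncard_union A B hAfin hBfin
    omega
  have : ¬ (A ∩ B ⊆ F) := by
    intro hsub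
    have := Set.ncard_le_ncard hsub hFfin
    omega
  obtain ⟨p, hpAB, hpF⟩ := Set.not_subset.mp this
  exact honest p hpF h₁ h₂ hpAB.1 hpAB.2
end

section
/- Let the set of peers P be a finite set of cardinality 3f+1, let H be a type of hashes, and let current votes be given by a partial assignment v : P → Option H (v p = none means peer p has not yet voted; each peer casts at most one vote). Let M = |{p : v p = none}| be the number of missing votes, and suppose that for every hash h, |{p : v p = some h}| + M < 2f+1 (i.e., the number of missing votes plus the number of votes for the most frequent hash is less than the supermajority threshold). Then for every total assignment g : P → H extending v (i.e., g p = h whenever v p = some h), and for every hash h, the set {p : g p = h} has cardinality strictly less than 2f+1; that is, no hash can ever collect a supermajority of votes. -/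
/-- Correctness of the reject condition: if for every hash the number of votes for it
plus the number of missing votes is below the supermajority threshold `2f+1`, then no
completion of the voting gives any hash a supermajority. -/
theorem reject_is_final (P : Type*) [Fintype P] (f : ℕ)
    (hcard : Fintype.card P = 3 * f + 1)
    (H : Type*) (v : P → Option H)
    (hreject : ∀ h : H, {p | v p = some h}.ncard + {p | v p = none}.ncard < 2 * f + 1)
    (g : P → H) (hext : ∀ (p : P) (h : H), v p = some h → g p = h)
    (h : H) :
    {p | g p = h}.ncard < 2 * f + 1 := by
  have hsub : {p | g p = h} ⊆ {p | v p = some h} ∪ {p | v p = none} := by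
    intro p hp
    cases hv : v p with
    | none => exact Or.inr hv
    | some h' =>
      left
      have := hext p h' hv
      simp only [Set.mem_setOf_eq] at hp ⊢
      rw [hv, ← this, hp]
  calc {p | g p = h}.ncard ≤ ({p | v p = some h} ∪ {p | v p = none}).ncard :=
        Set.ncard_le_ncard hsub (Set.toFinite _)
    _ ≤ {p | v p = some h}.ncard + {p | v p = none}.ncard :=
        Set.ncard_union_le _ _
    _ < 2 * f + 1 := hreject h
end
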